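/- Let q be an odd prime power. There is a deterministic classical strategy solving the shifted Legendre sequence problem (identifying s from queries to f_s(i)=χ(i+s)) with O(log q) queries; specifically, at most ⌈log q / log(4/3)⌉ + 3 queries suffice. -/

import Mathlib

open scoped Classical

/-- The quadratic character of a finite field: `0` at `0`, `1` on nonzero
squares, `-1` on nonsquares. -/
noncomputable def qchar {F : Type*} [Field F] (x : F) : ℤ :=
  if x = 0 then 0 else if IsSquare x then 1 else -1

/-- The transcript of a deterministic adaptive query algorithm after `d`
queries. -/
def transcript {Q A : Type*} (f : Q → A) (query : List A → Q) : ℕ → List A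
  | 0 => []
  | d + 1 => transcript f query d ++ [f (query (transcript f query d))]

section lemmas
open Finset
variable {F : Type*} [Field F] [Fintype F]

lemma qchar_eq (x : F) : qchar x = quadraticChar F x := by
  rw [quadraticChar_apply, quadraticCharFun, qchar]
  split_ifs <;> rfl

lemma qchar_eq_zero_iff {x : F} : qchar x = 0 ↔ x = 0 := by
  unfold qchar; split_ifs <;> simp_all

lemma qchar_mem (x : F) : qchar x = 0 ∨ qchar x = 1 ∨ qchar x = -1 := by
  unfold qchar; split_ifs <;> simp

lemma qchar_sum_shift (h2 : ringChar F ≠ 2) {s t : F} (hst : s ≠ t) :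
    ∑ i : F, qchar (i + s) * qchar (i + t) = -1 := by
  simp only [qchar_eq]
  set χ := quadraticChar F with hχ
  set a := t - s with ha
  have ha0 : a ≠ 0 := sub_ne_zero.mpr (Ne.symm hst)
  have step1 : ∑ i : F, χ (i + s) * χ (i + t) = ∑ i : F, χ i * χ (i + a) := by
    rw [← Equiv.sum_comp (Equiv.subRight s) (fun i => χ (i + s) * χ (i + t))]
    refine Finset.sum_congr rfl fun i _ => ?_
    have e1 : (Equiv.subRight s) i + s = i := by simp
    have e2 : (Equiv.subRight s) i + t = i + a := by
      simp only [Equiv.subRight_apply]; ring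
    rw [e1, e2]
  rw [step1]
  have step2 : ∑ i : F, χ i * χ (i + a) = ∑ i ∈ univ.erase 0, χ i * χ (i + a) := by
    refine (Finset.sum_erase _ ?_).symm
    simp [hχ, quadraticChar_zero]
  rw [step2]
  have step3 : ∀ i ∈ univ.erase (0:F), χ i * χ (i + a) = χ (1 + a * i⁻¹) := by
    intro i hi
    have hi0 : i ≠ 0 := (Finset.mem_erase.mp hi).1
    have : i + a = i * (1 + a * i⁻¹) := by field_simp
    rw [this, map_mul, ← mul_assoc]
    have : χ i * χ i = 1 := by
      rw [← pow_two]; exact quadraticChar_sq_one hi0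
    rw [this, one_mul]
  rw [Finset.sum_congr rfl step3]
  have step4 : ∑ i ∈ univ.erase (0:F), χ (1 + a * i⁻¹) = ∑ u ∈ univ.erase (1:F), χ u := by
    refine Finset.sum_nbij' (fun i => 1 + a * i⁻¹) (fun u => a * (u - 1)⁻¹) ?_ ?_ ?_ ?_ ?_
    · intro i hi
      have hi0 : i ≠ 0 := (Finset.mem_erase.mp hi).1
      refine Finset.mem_erase.mpr ⟨?_, Finset.mem_univ _⟩
      intro h
      have : a * i⁻¹ = 0 := by linear_combination h
      simp [ha0, hi0] at this
    · intro u hu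
      have hu1 : u ≠ 1 := (Finset.mem_erase.mp hu).1
      refine Finset.mem_erase.mpr ⟨?_, Finset.mem_univ _⟩
      have : u - 1 ≠ 0 := sub_ne_zero.mpr hu1
      simp [ha0, this]
    · intro i hi
      have hi0 : i ≠ 0 := (Finset.mem_erase.mp hi).1
      field_simp
      simp [ha0]
    · intro u hu
      have hu1 : u - 1 ≠ 0 := sub_ne_zero.mpr (Finset.mem_erase.mp hu).1
      field_simp
      ring
    · intro i hi; rfl
  rw [step4]
  have hsum : ∑ u : F, χ u = 0 := quadraticChar_sum_zero h2
  have h1 : χ 1 = 1 := map_one χ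
  have := Finset.add_sum_erase univ χ (Finset.mem_univ (1:F))
  rw [hsum, h1] at this
  linarith
lemma qchar_prod_ge (x y : F) : -1 ≤ qchar x * qchar y := by
  rcases qchar_mem x with h | h | h <;> rcases qchar_mem y with h' | h' | h' <;>
    rw [h, h'] <;> norm_num

lemma pair_count (h2 : ringChar F ≠ 2) {s t : F} (hst : s ≠ t) :
    2 * ((univ.filter fun i : F => qchar (i + s) = qchar (i + t)).card : ℤ)
      ≤ (Fintype.card F : ℤ) - 1 := by
  have key := qchar_sum_shift h2 hst
  have hle : ∀ i : F,
      (if qchar (i + s) = qchar (i + t) then (2:ℤ) else 0) - 1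
        ≤ qchar (i + s) * qchar (i + t) := by
    intro i
    split_ifs with h
    · have ht0 : i + t ≠ 0 := by
        intro h0
        have hs0 : qchar (i + s) = 0 := by rw [h, h0, qchar_eq_zero_iff]
        rw [qchar_eq_zero_iff] at hs0
        exact hst (by linear_combination hs0 - h0)
      rcases qchar_mem (i + t) with h' | h' | h' <;> rw [h, h'] <;>
        first | (exact absurd (qchar_eq_zero_iff.mp h') ht0) | norm_num
    · have := qchar_prod_ge (i + s) (i + t); linarith
  have hsum := Finset.sum_le_sum fun i (_ : i ∈ (univ : Finset F)) => hle i
  rw [key, Finset.sum_sub_distrib, Finset.sum_const, ← Finset.sum_filter] at hsum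
  rw [Finset.sum_const] at hsum
  simp only [Finset.card_univ, nsmul_eq_mul, mul_one] at hsum
  linarith

lemma exists_split (h2 : ringChar F ≠ 2) (S : Finset F) (hS : 2 ≤ S.card) :
    ∃ i : F, ∀ a : ℤ, 4 * (S.filter fun s => qchar (i + s) = a).card ≤ 3 * S.card := by
  by_contra hcon
  push_neg at hcon
  have hn2 : (2:ℤ) ≤ (S.card : ℤ) := by exact_mod_cast hS
  have hnq : (S.card : ℤ) ≤ (Fintype.card F : ℤ) := by
    exact_mod_cast S.card_le_univ.trans_eq Finset.card_univ
  set A : F → ℤ := fun i => ∑ s ∈ S, ∑ t ∈ S.erase s,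
      (if qchar (i + s) = qchar (i + t) then (1:ℤ) else 0) with hA
  have hA_lower : ∀ i : F,
      (3 * (S.card : ℤ) + 1) * (3 * (S.card : ℤ) - 3) ≤ 16 * A i := by
    intro i
    obtain ⟨a, ha⟩ := hcon i
    set C : Finset F := S.filter fun s => qchar (i + s) = a with hC
    have hCm : 3 * (S.card : ℤ) + 1 ≤ 4 * (C.card : ℤ) := by exact_mod_cast ha
    have hCS : C ⊆ S := Finset.filter_subset _ _
    have hmain : (C.card : ℤ) * ((C.card : ℤ) - 1) ≤ A i := by
      have inner : ∀ s ∈ C, ((C.card : ℤ) - 1) ≤ ∑ t ∈ S.erase s,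
          (if qchar (i + s) = qchar (i + t) then (1:ℤ) else 0) := by
        intro s hs
        have hpos : 1 ≤ C.card := Finset.card_pos.mpr ⟨s, hs⟩
        have h1 : ∑ t ∈ C.erase s, (1:ℤ) = (C.card : ℤ) - 1 := by
          rw [Finset.sum_const, Finset.card_erase_of_mem hs, nsmul_eq_mul, mul_one,
            Nat.cast_sub hpos, Nat.cast_one]
        have h2' : ∑ t ∈ C.erase s, (1:ℤ)
            = ∑ t ∈ C.erase s, (if qchar (i + s) = qchar (i + t) then (1:ℤ) else 0) := by
          refine Finset.sum_congr rfl fun t ht => ?_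
          rw [if_pos]
          have hsC := (Finset.mem_filter.mp hs).2
          have htC := (Finset.mem_filter.mp (Finset.mem_of_mem_erase ht)).2
          rw [hsC, htC]
        have h3 : ∑ t ∈ C.erase s, (if qchar (i + s) = qchar (i + t) then (1:ℤ) else 0)
            ≤ ∑ t ∈ S.erase s, (if qchar (i + s) = qchar (i + t) then (1:ℤ) else 0) := by
          refine Finset.sum_le_sum_of_subset_of_nonneg
            (Finset.erase_subset_erase _ hCS) fun t _ _ => ?_
          split_ifs <;> norm_num
        linarith [h1, h2', h3]
      have outer : ∑ s ∈ C, ((C.card : ℤ) - 1) ≤ A i := by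
        have step := Finset.sum_le_sum inner
        have step2 : ∑ s ∈ C, ∑ t ∈ S.erase s,
              (if qchar (i + s) = qchar (i + t) then (1:ℤ) else 0) ≤ A i := by
          refine Finset.sum_le_sum_of_subset_of_nonneg hCS fun s _ _ => ?_
          refine Finset.sum_nonneg fun t _ => ?_
          split_ifs <;> norm_num
        linarith
      rw [Finset.sum_const, nsmul_eq_mul] at outer
      exact outer
    nlinarith [hmain, hCm, hn2]
  have hsum_eq : ∑ i : F, A i = ∑ s ∈ S, ∑ t ∈ S.erase s,
      ((univ.filter fun i : F => qchar (i + s) = qchar (i + t)).card : ℤ) := by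
    rw [Finset.sum_comm]
    refine Finset.sum_congr rfl fun s _ => ?_
    rw [Finset.sum_comm]
    refine Finset.sum_congr rfl fun t _ => ?_
    rw [Finset.sum_boole]
  have hupper : 2 * ∑ i : F, A i
      ≤ (S.card : ℤ) * ((S.card : ℤ) - 1) * ((Fintype.card F : ℤ) - 1) := by
    rw [hsum_eq, Finset.mul_sum]
    have hbnd : ∀ s ∈ S, 2 * ∑ t ∈ S.erase s,
        ((univ.filter fun i : F => qchar (i + s) = qchar (i + t)).card : ℤ)
          ≤ ((S.card : ℤ) - 1) * ((Fintype.card F : ℤ) - 1) := by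
      intro s hs
      rw [Finset.mul_sum]
      have hpos : 1 ≤ S.card := by omega
      have each : ∀ t ∈ S.erase s,
          2 * ((univ.filter fun i : F => qchar (i + s) = qchar (i + t)).card : ℤ)
            ≤ (Fintype.card F : ℤ) - 1 :=
        fun t ht => pair_count h2 (Finset.ne_of_mem_erase ht).symm
      calc ∑ t ∈ S.erase s, 2 * ((univ.filter fun i : F =>
              qchar (i + s) = qchar (i + t)).card : ℤ)
          ≤ ∑ _t ∈ S.erase s, ((Fintype.card F : ℤ) - 1) := Finset.sum_le_sum each
        _ = ((S.card : ℤ) - 1) * ((Fintype.card F : ℤ) - 1) := by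
            rw [Finset.sum_const, Finset.card_erase_of_mem hs, nsmul_eq_mul,
              Nat.cast_sub hpos, Nat.cast_one]
    calc ∑ s ∈ S, 2 * ∑ t ∈ S.erase s,
            ((univ.filter fun i : F => qchar (i + s) = qchar (i + t)).card : ℤ)
        ≤ ∑ _s ∈ S, ((S.card : ℤ) - 1) * ((Fintype.card F : ℤ) - 1) :=
          Finset.sum_le_sum hbnd
      _ = (S.card : ℤ) * (((S.card : ℤ) - 1) * ((Fintype.card F : ℤ) - 1)) := by
          rw [Finset.sum_const, nsmul_eq_mul]
      _ = (S.card : ℤ) * ((S.card : ℤ) - 1) * ((Fintype.card F : ℤ) - 1) := by ring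
  have hlower : (Fintype.card F : ℤ) * ((3 * (S.card : ℤ) + 1) * (3 * (S.card : ℤ) - 3))
      ≤ 16 * ∑ i : F, A i := by
    rw [Finset.mul_sum]
    calc (Fintype.card F : ℤ) * ((3 * (S.card : ℤ) + 1) * (3 * (S.card : ℤ) - 3))
        = ∑ _i : F, (3 * (S.card : ℤ) + 1) * (3 * (S.card : ℤ) - 3) := by
          rw [Finset.sum_const, Finset.card_univ, nsmul_eq_mul]
      _ ≤ ∑ i : F, 16 * A i := Finset.sum_le_sum fun i _ => hA_lower i
  set n : ℤ := (S.card : ℤ)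
  set q : ℤ := (Fintype.card F : ℤ)
  have key : 3 * q * (3 * n + 1) * (n - 1) ≤ 8 * n * (n - 1) * (q - 1) := by
    have e : q * ((3 * n + 1) * (3 * n - 3)) = 3 * q * (3 * n + 1) * (n - 1) := by ring
    linarith [hlower, hupper]
  have hx : (n - 1) * (n * q + 8 * n + 3 * q) ≤ 0 := by linarith [key]
  have h1 : (0:ℤ) < n - 1 := by linarith
  have h2' : (0:ℤ) < n * q + 8 * n + 3 * q := by nlinarith
  exact absurd hx (not_le.mpr (mul_pos h1 h2'))
noncomputable def pick (h2 : ringChar F ≠ 2) (S : Finset F) : F :=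
  if h : 2 ≤ S.card then (exists_split h2 S h).choose else 0

lemma pick_spec (h2 : ringChar F ≠ 2) {S : Finset F} (hS : 2 ≤ S.card) (a : ℤ) :
    4 * (S.filter fun s => qchar (pick h2 S + s) = a).card ≤ 3 * S.card := by
  rw [pick, dif_pos hS]
  exact (exists_split h2 S hS).choose_spec a

noncomputable def candAux (h2 : ringChar F ≠ 2) : List ℤ → Finset F → Finset F
  | [], S => S
  | a :: l, S => candAux h2 l (S.filter fun s => qchar (pick h2 S + s) = a)

lemma candAux_append (h2 : ringChar F ≠ 2) (l : List ℤ) (a : ℤ) :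
    ∀ S : Finset F, candAux h2 (l ++ [a]) S
      = (candAux h2 l S).filter
          (fun s => qchar (pick h2 (candAux h2 l S) + s) = a) := by
  induction l with
  | nil => intro S; rfl
  | cons b l ih => intro S; simp only [List.cons_append, candAux]; exact ih _

end lemmas

/-- Classical upper bound for the shifted Legendre sequence problem: there is a
deterministic adaptive strategy identifying the shift `s` using at most
`⌈log q / log (4/3)⌉ + 3` queries to `f_s(i) = χ(i+s)`. -/
theorem sls_classical_upper_bound {F : Type*} [Field F] [Fintype F]
    (hq : Odd (Fintype.card F)) :
    ∃ (query : List ℤ → F) (guess : List ℤ → F),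
      ∀ s : F,
        guess (transcript (fun i => qchar (i + s)) query
          (⌈Real.log (Fintype.card F) / Real.log (4 / 3)⌉₊ + 3)) = s := by
  have h2 : ringChar F ≠ 2 := by
    intro h
    have := FiniteField.even_card_of_char_two h
    rw [Nat.odd_iff] at hq
    omega
  set q : ℕ := Fintype.card F with hqdef
  refine ⟨fun l => pick h2 (candAux h2 l Finset.univ),
    fun l => ∑ x ∈ candAux h2 l Finset.univ, x, ?_⟩
  intro s
  set f : F → ℤ := fun i => qchar (i + s) with hf
  set qu : List ℤ → F := fun l => pick h2 (candAux h2 l Finset.univ) with hqu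
  have inv : ∀ k : ℕ,
      s ∈ candAux h2 (transcript f qu k) Finset.univ ∧
      ((candAux h2 (transcript f qu k) Finset.univ).card ≤ 1 ∨
        4 ^ k * (candAux h2 (transcript f qu k) Finset.univ).card ≤ 3 ^ k * q) := by
    intro k
    induction k with
    | zero =>
      constructor
      · exact Finset.mem_univ s
      · right; simp [candAux, transcript]; exact le_of_eq hqdef.symm
    | succ k ih =>
      obtain ⟨hmem, hcard⟩ := ih
      set C := candAux h2 (transcript f qu k) Finset.univ with hC
      have htr : transcript f qu (k + 1) = transcript f qu k ++ [f (qu (transcript f qu k))] :=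
        rfl
      have hnew : candAux h2 (transcript f qu (k + 1)) Finset.univ
          = C.filter (fun t => qchar (pick h2 C + t) = f (qu (transcript f qu k))) := by
        rw [htr, candAux_append]
      have hquC : qu (transcript f qu k) = pick h2 C := rfl
      constructor
      · rw [hnew]
        refine Finset.mem_filter.mpr ⟨hmem, ?_⟩
        rw [hquC, hf]
      · have hsub : (candAux h2 (transcript f qu (k + 1)) Finset.univ).card ≤ C.card := by
          rw [hnew]; exact Finset.card_le_card (Finset.filter_subset _ _)
        by_cases hbig : 2 ≤ C.card
        · rcases hcard with h1 | h1
          · omega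
          · right
            have hps := pick_spec h2 hbig (f (qu (transcript f qu k)))
            rw [← hnew] at hps
            calc 4 ^ (k + 1) * (candAux h2 (transcript f qu (k + 1)) Finset.univ).card
                = 4 ^ k * (4 * (candAux h2 (transcript f qu (k + 1)) Finset.univ).card) := by
                  ring
              _ ≤ 4 ^ k * (3 * C.card) := Nat.mul_le_mul_left _ hps
              _ = 3 * (4 ^ k * C.card) := by ring
              _ ≤ 3 * (3 ^ k * q) := Nat.mul_le_mul_left _ h1
              _ = 3 ^ (k + 1) * q := by ring
        · left; omega
  -- numeric part
  set d : ℕ := ⌈Real.log q / Real.log (4 / 3)⌉₊ + 3 with hd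
  obtain ⟨hmem, hcard⟩ := inv d
  have hq0 : 0 < q := Fintype.card_pos
  have hnum : 3 ^ d * q < 2 * 4 ^ d := by
    have hlog : (0:ℝ) < Real.log (4 / 3) := Real.log_pos (by norm_num)
    have hle : Real.log q ≤ (d : ℝ) * Real.log (4 / 3) := by
      have h1 : Real.log q / Real.log (4 / 3) ≤ (⌈Real.log q / Real.log (4 / 3)⌉₊ : ℝ) :=
        Nat.le_ceil _
      have h2' : ((⌈Real.log q / Real.log (4 / 3)⌉₊ : ℕ) : ℝ) ≤ (d : ℝ) := by
        rw [hd]; push_cast; linarith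
      have h3 := mul_le_mul_of_nonneg_right (h1.trans h2') hlog.le
      rwa [div_mul_cancel₀ _ hlog.ne'] at h3
    have hqle : (q : ℝ) ≤ (4 / 3) ^ d := by
      have e1 : (q : ℝ) = Real.exp (Real.log q) := by
        rw [Real.exp_log]
        exact_mod_cast hq0
      have e2 : ((4 / 3 : ℝ)) ^ d = Real.exp ((d : ℝ) * Real.log (4 / 3)) := by
        rw [← Real.log_pow, Real.exp_log (pow_pos (by norm_num : (0:ℝ) < 4 / 3) d)]
      rw [e1, e2]
      exact Real.exp_le_exp.mpr hle
    have hmul : (3 : ℝ) ^ d * (4 / 3) ^ d = 4 ^ d := by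
      rw [← mul_pow]; norm_num
    have h3d : (0:ℝ) < (3:ℝ) ^ d := pow_pos (by norm_num) d
    have h4d : (0:ℝ) < (4:ℝ) ^ d := pow_pos (by norm_num) d
    have hreal : (3 : ℝ) ^ d * (q : ℝ) < 2 * 4 ^ d := by nlinarith
    exact_mod_cast hreal
  have hfin : (candAux h2 (transcript f qu d) Finset.univ).card ≤ 1 := by
    rcases hcard with h | h
    · exact h
    · by_contra hgt
      push_neg at hgt
      have : 2 * 4 ^ d ≤ 4 ^ d * (candAux h2 (transcript f qu d) Finset.univ).card := by
        calc 2 * 4 ^ d = 4 ^ d * 2 := by ring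
          _ ≤ _ := Nat.mul_le_mul_left _ hgt
      omega
  have hsingle : candAux h2 (transcript f qu d) Finset.univ = {s} := by
    apply Finset.eq_singleton_iff_unique_mem.mpr
    refine ⟨hmem, fun x hx => ?_⟩
    have := Finset.card_le_one.mp hfin x hx s hmem
    exact this
  show (∑ x ∈ candAux h2 (transcript f qu d) Finset.univ, x) = s
  rw [hsingle, Finset.sum_singleton]
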